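/- Let φ be a lower semicontinuous submeasure on ω with φ(ω) = ∞, and let (A_n) be any sequence of subsets of ω. Then there exist signs (ε_n) ∈ {−1,1}^ω and pairwise disjoint finite sets (F_n) ⊆ ω such that F_n ⊆ ⋂_{k=0}^n A_k^{ε_k} and φ(F_n) ≥ n for every n, where A^1 = A and A^{−1} = ω \ A. -/

import Mathlib

open Filter
open scoped ENNReal

/-- `φ` is a submeasure on `ω`: vanishes on `∅`, finite on singletons, monotone,
and subadditive. -/
def IsSubmeasure (φ : Set ℕ → ℝ≥0∞) : Prop :=
  φ ∅ = 0 ∧ (∀ n : ℕ, φ {n} ≠ ⊤) ∧ (∀ ⦃A B : Set ℕ⦄, A ⊆ B → φ A ≤ φ B) ∧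
    ∀ A B : Set ℕ, φ (A ∪ B) ≤ φ A + φ B

/-- Lower semicontinuity: `φ(A) = lim_n φ(A ∩ [0,n])`. -/
def IsLSC (φ : Set ℕ → ℝ≥0∞) : Prop :=
  ∀ A : Set ℕ, φ A = ⨆ n : ℕ, φ (A ∩ Set.Iic n)

/-- `A` belongs to the exhaustive ideal `Exh(φ)`: `lim_n φ(A \ [0,n]) = 0`. -/
def ExhMem (φ : Set ℕ → ℝ≥0∞) (A : Set ℕ) : Prop :=
  Tendsto (fun n : ℕ => φ (A \ Set.Iic n)) atTop (nhds 0)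

/-!
Call a set large if it has infinite submeasure. By subadditivity, for every large `S` and every
`A` one of `S ∩ A`, `S ∩ Aᶜ` is large, so the signs `ε_n` can be chosen greedily keeping every
`⋂_{k ≤ n} A_k^{ε_k}` large. A large set stays large after removing an initial segment, since
finite sets have finite submeasure; lower semicontinuity then yields a piece of submeasure at
least `n` inside a bounded window `(m, j]`. Taking consecutive windows makes the pieces disjoint.
-/

open Set

namespace IsSubmeasure

variable {φ : Set ℕ → ℝ≥0∞}

theorem ne_top_of_finite (hφ : IsSubmeasure φ) {F : Set ℕ} (hF : F.Finite) : φ F ≠ ⊤ := by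
  induction F, hF using Set.Finite.induction_on with
  | empty => simp [hφ.1]
  | @insert a s _ _ ih =>
    rw [insert_eq]
    exact ((hφ.2.2.2 {a} s).trans_lt
      (ENNReal.add_lt_top.mpr ⟨(hφ.2.1 a).lt_top, ih.lt_top⟩)).ne

theorem eq_top_inter_or_inter_compl (hφ : IsSubmeasure φ) {S : Set ℕ} (hS : φ S = ⊤)
    (A : Set ℕ) : φ (S ∩ A) = ⊤ ∨ φ (S ∩ Aᶜ) = ⊤ := by
  have h : ⊤ ≤ φ (S ∩ A) + φ (S ∩ Aᶜ) := by
    rw [← hS]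
    calc φ S = φ (S ∩ A ∪ S ∩ Aᶜ) := by rw [inter_union_compl]
      _ ≤ _ := hφ.2.2.2 _ _
  rwa [top_le_iff, ENNReal.add_eq_top] at h

theorem eq_top_diff_Iic (hφ : IsSubmeasure φ) {S : Set ℕ} (hS : φ S = ⊤) (m : ℕ) :
    φ (S \ Iic m) = ⊤ := by
  have h : ⊤ ≤ φ (S ∩ Iic m) + φ (S \ Iic m) := by
    rw [← hS]
    calc φ S = φ (S ∩ Iic m ∪ S \ Iic m) := by rw [inter_union_sdiff]
      _ ≤ _ := hφ.2.2.2 _ _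
  rw [top_le_iff, ENNReal.add_eq_top] at h
  exact h.resolve_left (hφ.ne_top_of_finite ((finite_Iic m).subset inter_subset_right))

theorem exists_le_inter_Ioc (hφ : IsSubmeasure φ) (hlsc : IsLSC φ) {S : Set ℕ} (hS : φ S = ⊤)
    (n m : ℕ) : ∃ j, m ≤ j ∧ (n : ℝ≥0∞) ≤ φ (S ∩ Ioc m j) := by
  have hlt : (n : ℝ≥0∞) < ⨆ j : ℕ, φ (S \ Iic m ∩ Iic j) := by
    rw [← hlsc, hφ.eq_top_diff_Iic hS m]
    exact ENNReal.natCast_lt_top n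
  obtain ⟨j, hj⟩ := lt_iSup_iff.mp hlt
  refine ⟨max m j, le_max_left m j, hj.le.trans (hφ.2.2.1 ?_)⟩
  rintro x ⟨⟨hxS, hxm⟩, hxj⟩
  exact ⟨hxS, not_le.mp hxm, le_max_of_le_right hxj⟩

end IsSubmeasure

theorem exists_signs_forall_biInter {α : Type*} (P : Set α → Prop) (huniv : P univ)
    (hsplit : ∀ S A, P S → P (S ∩ A) ∨ P (S ∩ Aᶜ)) (A : ℕ → Set α) :
    ∃ ε : ℕ → ℤ, (∀ n, ε n = 1 ∨ ε n = -1) ∧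
      ∀ n, P (⋂ k ∈ Finset.range n, if ε k = 1 then A k else (A k)ᶜ) := by
  classical
  let D : ℕ → Set α := fun n =>
    Nat.rec univ (fun n S => if P (S ∩ A n) then S ∩ A n else S ∩ (A n)ᶜ) n
  let ε : ℕ → ℤ := fun n => if P (D n ∩ A n) then 1 else -1
  have hD : ∀ n, D n = ⋂ k ∈ Finset.range n, if ε k = 1 then A k else (A k)ᶜ := by
    intro n
    induction n with
    | zero => simp [D]
    | succ n ih =>
      rw [Finset.range_add_one, Finset.set_biInter_insert, ← ih, inter_comm]
      show (if P (D n ∩ A n) then D n ∩ A n else D n ∩ (A n)ᶜ) = _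
      by_cases h : P (D n ∩ A n) <;> simp [ε, h]
  have hP : ∀ n, P (D n) := by
    intro n
    induction n with
    | zero => exact huniv
    | succ n ih =>
      show P (if P (D n ∩ A n) then D n ∩ A n else D n ∩ (A n)ᶜ)
      split_ifs with h
      exacts [h, (hsplit _ _ ih).resolve_left h]
  refine ⟨ε, fun n => ?_, fun n => hD n ▸ hP n⟩
  by_cases h : P (D n ∩ A n) <;> simp [ε, h]

theorem exists_disjoint_finite_subsets (φ : Set ℕ → ℝ≥0∞) (C : ℕ → Set ℕ)
    (hC : ∀ n m : ℕ, ∃ j, m ≤ j ∧ (n : ℝ≥0∞) ≤ φ (C n ∩ Ioc m j)) :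
    ∃ F : ℕ → Set ℕ, (∀ m n, m ≠ n → F m ∩ F n = ∅) ∧ (∀ n, (F n).Finite) ∧
      (∀ n, F n ⊆ C n) ∧ ∀ n : ℕ, (n : ℝ≥0∞) ≤ φ (F n) := by
  choose j hmj hj using hC
  let M : ℕ → ℕ := fun n => Nat.rec 0 (fun n b => j n b) n
  have hM : Monotone M := monotone_nat_of_le_succ fun n => hmj n (M n)
  refine ⟨fun n => C n ∩ Ioc (M n) (M (n + 1)), fun m n hmn => ?_,
    fun n => (finite_Ioc _ _).subset inter_subset_right, fun n => inter_subset_left,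
    fun n => hj n (M n)⟩
  rw [← disjoint_iff_inter_eq_empty]
  exact ((hM.pairwise_disjoint_on_Ioc_succ hmn).mono inter_subset_right inter_subset_right :)

/-- For an lsc submeasure `φ` with `φ(ω) = ∞` and any sequence `(A_n)` of subsets of `ω`,
there exist signs `(ε_n) ∈ {−1,1}^ω` and pairwise disjoint finite sets `(F_n)` with
`F_n ⊆ ⋂_{k=0}^n A_k^{ε_k}` and `φ(F_n) ≥ n`, where `A^1 = A` and `A^{−1} = ω \ A`. -/
theorem stmt_18 (φ : Set ℕ → ℝ≥0∞) (hφ : IsSubmeasure φ) (hlsc : IsLSC φ)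
    (hinf : φ Set.univ = ⊤) (A : ℕ → Set ℕ) :
    ∃ (ε : ℕ → ℤ) (F : ℕ → Set ℕ),
      (∀ n, ε n = 1 ∨ ε n = -1) ∧
      (∀ m n, m ≠ n → F m ∩ F n = ∅) ∧
      (∀ n, (F n).Finite) ∧
      (∀ n, F n ⊆ ⋂ k ∈ Finset.range (n + 1),
        (if ε k = 1 then A k else (A k)ᶜ)) ∧
      ∀ n : ℕ, (n : ℝ≥0∞) ≤ φ (F n) := by
  obtain ⟨ε, hε, hlarge⟩ := exists_signs_forall_biInter (φ · = ⊤) hinf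
    (fun _ B hS => hφ.eq_top_inter_or_inter_compl hS B) A
  obtain ⟨F, hdisj, hfin, hsub, hφF⟩ := exists_disjoint_finite_subsets φ _
    fun n => hφ.exists_le_inter_Ioc hlsc (hlarge (n + 1)) n
  exact ⟨ε, F, hε, hdisj, hfin, hsub, hφF⟩
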